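/- Let $X$ be a compact metric space and $f:X\to X$ a continuous map. If there exists $p\in X$ with $X=\overline{\omega}(p,f)$, then the set $\overline{T}(f)=\{x\in X : X=\overline{\omega}(x,f)\}$ is residual in $X$ (contains a dense $G_\delta$ set). -/

import Mathlib

open Filter Metric Set
open scoped Classical Topology

noncomputable def upperDensity (A : Set ℕ) : ℝ :=
  Filter.limsup
    (fun n : ℕ => (((Finset.range n).filter (fun i => i ∈ A)).card : ℝ) / n) Filter.atTop

def HasDensityOne (A : Set ℕ) : Prop :=
  Filter.Tendsto
    (fun n : ℕ => (((Finset.range n).filter (fun i => i ∈ A)).card : ℝ) / n) Filter.atTop (nhds 1)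

def omegaBarSeq {X : Type*} [MetricSpace X] (x : ℕ → X) : Set X :=
  {y | ∀ ε > 0, 0 < upperDensity {i | dist (x i) y < ε}}

def omegaBar {X : Type*} [MetricSpace X] (f : X → X) (x : X) : Set X :=
  omegaBarSeq (fun i => f^[i] x)

/-!
Lower semicontinuity of finite visit frequencies makes `{x | c ≤ upperDensity (visits of x to U)}`
a `G_δ` for each open `U`. Intersecting over the countably many balls `B(f^k p, 1/(m+1))`, with `c`
the upper density of the visits of `p` itself, gives a `G_δ` set `G`. It contains the orbit of `p`,
because shifting a set of times by `s` does not lower its upper density, and that orbit is dense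
since every point lies in `ω̄(p)`. Conversely a point of `G` visits every such ball with positive upper
density, and these balls approximate every ball of `X`, so its `ω̄` is all of `X`.
-/

noncomputable def partialDensity (A : Set ℕ) (n : ℕ) : ℝ :=
  (((Finset.range n).filter (· ∈ A)).card : ℝ) / n

lemma upperDensity_eq_limsup (A : Set ℕ) :
    upperDensity A = limsup (partialDensity A) atTop := rfl

lemma partialDensity_nonneg (A : Set ℕ) (n : ℕ) : 0 ≤ partialDensity A n := by
  unfold partialDensity; positivity

lemma partialDensity_le_one (A : Set ℕ) (n : ℕ) : partialDensity A n ≤ 1 := by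
  unfold partialDensity
  apply div_le_one_of_le₀ _ n.cast_nonneg
  exact_mod_cast (Finset.card_filter_le _ _).trans (Finset.card_range n).le

lemma partialDensity_mono {A B : Set ℕ} (h : A ⊆ B) (n : ℕ) :
    partialDensity A n ≤ partialDensity B n := by
  unfold partialDensity
  gcongr

lemma isBoundedUnder_partialDensity (A : Set ℕ) :
    IsBoundedUnder (· ≤ ·) atTop (partialDensity A) :=
  isBoundedUnder_of ⟨1, partialDensity_le_one A⟩

lemma isCoboundedUnder_partialDensity (A : Set ℕ) :
    IsCoboundedUnder (· ≤ ·) atTop (partialDensity A) :=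
  isCoboundedUnder_le_of_le atTop (partialDensity_nonneg A)

lemma upperDensity_mono {A B : Set ℕ} (h : A ⊆ B) : upperDensity A ≤ upperDensity B :=
  limsup_le_limsup (Eventually.of_forall (partialDensity_mono h))
    (isCoboundedUnder_partialDensity A) (isBoundedUnder_partialDensity B)

lemma upperDensity_empty : upperDensity ∅ = 0 := by
  rw [upperDensity_eq_limsup,
    show partialDensity ∅ = fun _ => 0 from funext fun n => by simp [partialDensity], limsup_const]

lemma nonempty_of_upperDensity_pos {A : Set ℕ} (h : 0 < upperDensity A) : A.Nonempty := by
  contrapose! h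
  rw [h, upperDensity_empty]

lemma le_upperDensity_iff {A : Set ℕ} {c : ℝ} :
    c ≤ upperDensity A ↔ ∀ q : ℚ, (q : ℝ) < c → ∃ᶠ n in atTop, (q : ℝ) < partialDensity A n := by
  rw [upperDensity_eq_limsup,
    le_limsup_iff (isCoboundedUnder_partialDensity A) (isBoundedUnder_partialDensity A)]
  refine ⟨fun h q hq => h q hq, fun h b hb => ?_⟩
  obtain ⟨q, hbq, hqc⟩ := exists_rat_btwn hb
  exact (h q hqc).mono fun n hn => hbq.trans hn

lemma partialDensity_le_preimage_add (A : Set ℕ) (s n : ℕ) :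
    partialDensity A n ≤ partialDensity ((· + s) ⁻¹' A) n + (s : ℝ) / n := by
  have hcard : ((Finset.range n).filter (· ∈ A)).card ≤
      ((Finset.range n).filter (· ∈ (· + s) ⁻¹' A)).card + s := by
    calc ((Finset.range n).filter (· ∈ A)).card
        ≤ ((Finset.range (s + n)).filter (· ∈ A)).card :=
          Finset.card_le_card <|
            Finset.filter_subset_filter _ (Finset.range_mono (Nat.le_add_left n s))
      _ = ((Finset.range s).filter (· ∈ A)).card +
            ((Finset.range n).filter (· ∈ (· + s) ⁻¹' A)).card := by
          rw [Finset.card_filter, Finset.sum_range_add]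
          simp only [Finset.card_filter, Set.mem_preimage, add_comm s]
      _ ≤ s + ((Finset.range n).filter (· ∈ (· + s) ⁻¹' A)).card := by
          gcongr
          exact (Finset.card_filter_le _ _).trans (Finset.card_range s).le
      _ = _ := add_comm _ _
  unfold partialDensity
  rw [← add_div]
  gcongr
  exact_mod_cast hcard

lemma upperDensity_le_preimage_add (A : Set ℕ) (s : ℕ) :
    upperDensity A ≤ upperDensity ((· + s) ⁻¹' A) := by
  have hs : Tendsto (fun n : ℕ => (s : ℝ) / n) atTop (𝓝 0) :=
    tendsto_const_div_atTop_nhds_zero_nat (s : ℝ)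
  calc upperDensity A
      ≤ limsup (partialDensity ((· + s) ⁻¹' A) + fun n : ℕ => (s : ℝ) / n) atTop :=
        limsup_le_limsup (Eventually.of_forall (partialDensity_le_preimage_add A s))
          (isCoboundedUnder_partialDensity A)
          (isBoundedUnder_le_add (isBoundedUnder_partialDensity _) hs.isBoundedUnder_le)
    _ ≤ upperDensity ((· + s) ⁻¹' A) + limsup (fun n : ℕ => (s : ℝ) / n) atTop :=
        limsup_add_le (isBoundedUnder_of ⟨0, fun n => partialDensity_nonneg _ n⟩)
          (isBoundedUnder_partialDensity _) hs.isCoboundedUnder_le hs.isBoundedUnder_le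
    _ = upperDensity ((· + s) ⁻¹' A) := by rw [hs.limsup_eq, add_zero]

section Semicontinuity

variable {X : Type*} [TopologicalSpace X] {A : X → Set ℕ}

lemma lowerSemicontinuous_partialDensity (hA : ∀ i, IsOpen {x | i ∈ A x}) (n : ℕ) :
    LowerSemicontinuous fun x => partialDensity (A x) n := by
  have hsum : (fun x => partialDensity (A x) n) =
      fun x => ∑ i ∈ Finset.range n, {x | i ∈ A x}.indicator (fun _ => (1 : ℝ) / n) x := by
    ext x
    simp [partialDensity, Finset.sum_ite, Set.indicator_apply, div_eq_mul_inv]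
  rw [hsum]
  exact lowerSemicontinuous_sum fun i _ =>
    (hA i).lowerSemicontinuous_indicator (by positivity)

lemma isGδ_setOf_le_upperDensity (hA : ∀ i, IsOpen {x | i ∈ A x}) (c : ℝ) :
    IsGδ {x | c ≤ upperDensity (A x)} := by
  have hG : {x | c ≤ upperDensity (A x)} =
      ⋂ q : {q : ℚ // (q : ℝ) < c}, ⋂ N : ℕ, ⋃ n ≥ N, {x | (q : ℝ) < partialDensity (A x) n} := by
    ext x
    simp only [Set.mem_ofPred_eq, le_upperDensity_iff, frequently_atTop, Set.mem_iInter,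
      Set.mem_iUnion, Subtype.forall, exists_prop]
  rw [hG]
  exact .iInter fun q => .iInter fun N => (isOpen_biUnion fun n _ =>
    (lowerSemicontinuous_partialDensity hA n).isOpen_preimage q).isGδ

end Semicontinuity

lemma omegaBarSeq_eq_univ_of_forall_upperDensity_le {X : Type*} [MetricSpace X] {u v : ℕ → X}
    {D : Set X} (hD : Dense D) (hDu : D ⊆ omegaBarSeq u)
    (huv : ∀ d ∈ D, ∀ m : ℕ, upperDensity {i | u i ∈ ball d (1 / (m + 1))} ≤
      upperDensity {i | v i ∈ ball d (1 / (m + 1))}) :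
    omegaBarSeq v = univ := by
  refine eq_univ_of_forall fun y ε hε => ?_
  obtain ⟨m, hm⟩ := exists_nat_one_div_lt (half_pos hε)
  obtain ⟨d, hdy, hdD⟩ := Metric.dense_iff.mp hD y _ (Nat.one_div_pos_of_nat (n := m))
  have hball : ball d (1 / (m + 1)) ⊆ ball y ε := by
    intro z hz
    rw [mem_ball] at hz hdy ⊢
    linarith [dist_triangle z d y, dist_comm d y]
  calc 0 < upperDensity {i | u i ∈ ball d (1 / (m + 1))} := hDu hdD _ Nat.one_div_pos_of_nat
    _ ≤ upperDensity {i | v i ∈ ball d (1 / (m + 1))} := huv d hdD m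
    _ ≤ upperDensity {i | dist (v i) y < ε} := upperDensity_mono fun i hi => hball hi

section Iterates

variable {X : Type*} {f : X → X}

lemma dense_range_iterate_of_omegaBar_eq_univ [MetricSpace X] {p : X} (hp : omegaBar f p = univ) :
    Dense (range fun k => f^[k] p) :=
  Metric.dense_iff.mpr fun y r hr =>
    let ⟨i, hi⟩ := nonempty_of_upperDensity_pos ((hp ▸ mem_univ y : y ∈ omegaBar f p) r hr)
    ⟨f^[i] p, hi, i, rfl⟩

lemma upperDensity_visits_le_iterate (x : X) (U : Set X) (s : ℕ) :
    upperDensity {i | f^[i] x ∈ U} ≤ upperDensity {i | f^[i] (f^[s] x) ∈ U} := by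
  simpa only [preimage_ofPred_eq, Function.iterate_add_apply] using
    upperDensity_le_preimage_add {i | f^[i] x ∈ U} s

end Iterates

theorem stmt10_general {X : Type*} [MetricSpace X] (f : X → X) (hf : Continuous f)
    (p : X) (hp : omegaBar f p = Set.univ) :
    ∃ G : Set X, IsGδ G ∧ Dense G ∧ G ⊆ {x : X | omegaBar f x = Set.univ} := by
  set B : ℕ → ℕ → Set X := fun k m => ball (f^[k] p) (1 / (m + 1))
  set G : Set X := ⋂ k, ⋂ m,
    {x | upperDensity {i | f^[i] p ∈ B k m} ≤ upperDensity {i | f^[i] x ∈ B k m}}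
  have horbit : (range fun s => f^[s] p) ⊆ G := by
    rintro _ ⟨s, rfl⟩
    exact mem_iInter₂.mpr fun k m => upperDensity_visits_le_iterate p (B k m) s
  refine ⟨G, .iInter fun k => .iInter fun m => isGδ_setOf_le_upperDensity
      (fun i => isOpen_ball.preimage (hf.iterate i)) _,
    (dense_range_iterate_of_omegaBar_eq_univ hp).mono horbit, fun x hx => ?_⟩
  refine omegaBarSeq_eq_univ_of_forall_upperDensity_le
    (dense_range_iterate_of_omegaBar_eq_univ hp) (hp ▸ subset_univ _) ?_
  rintro _ ⟨k, rfl⟩ m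
  exact mem_iInter₂.mp hx k m

theorem stmt10 {X : Type*} [MetricSpace X] [CompactSpace X] (f : X → X) (hf : Continuous f)
    (p : X) (hp : omegaBar f p = Set.univ) :
    ∃ G : Set X, IsGδ G ∧ Dense G ∧ G ⊆ {x : X | omegaBar f x = Set.univ} :=
  stmt10_general f hf p hp
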